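/- arXiv:2503.10039 — 2 statements merged into one kernel-verified Lean document; each statement's English description precedes it below -/
import Mathlib

section
/- For β = (1+√5)/2 (the golden ratio) and any m ∈ ℕ, S_β(2m+1) = [(0(01)^m)^∞]_β = (1 − β^{2m}) / ((β^{2m+1} − 1)(1 − β^2)). -/
open Function Filter

noncomputable section

/-- Left shift on sequences. -/
def shift (x : ℕ → ℕ) : ℕ → ℕ := fun i => x (i + 1)

/-- Strict lexicographic order on digit sequences. -/
def seqLt (x y : ℕ → ℕ) : Prop := ∃ n, (∀ i < n, x i = y i) ∧ x n < y n

/-- Non-strict lexicographic order. -/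
def seqLe (x y : ℕ → ℕ) : Prop := seqLt x y ∨ x = y

/-- The periodic sequence obtained by repeating the word `w`. -/
def wordSeq (w : List ℕ) : ℕ → ℕ := fun i => w.getD (i % w.length) 0

/-- The β-transformation x ↦ βx mod 1 on [0,1). -/
def Tmap (β : ℝ) : ℝ → ℝ := fun x => Int.fract (β * x)

/-- Survivor set of the open dynamical system with hole [0, t). -/
def K (β t : ℝ) : Set ℝ := {x | x ∈ Set.Ico (0:ℝ) 1 ∧ ∀ n : ℕ, t ≤ (Tmap β)^[n] x}

/-- The critical value `S_β(p)`. -/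
def S (β : ℝ) (p : ℕ) : ℝ :=
  sSup {t | t ∈ Set.Ico (0:ℝ) 1 ∧ ∃ x ∈ K β t, Function.minimalPeriod (Tmap β) x = p}

/-- Value of a digit sequence in base β. -/
def val (β : ℝ) (x : ℕ → ℕ) : ℝ := ∑' i, (x i : ℝ) / β ^ (i + 1)



section basic
variable {β : ℝ} (h1 : 1 < β) (h2 : β^2 = β + 1)

include h1 in
lemma gr_pos : 0 < β := lt_trans one_pos h1

include h1 h2 in
lemma gr_lt2 : β < 2 := by nlinarith

lemma Tmap_mem (x : ℝ) : Tmap β x ∈ Set.Ico (0:ℝ) 1 :=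
  ⟨Int.fract_nonneg _, Int.fract_lt_one _⟩

lemma Tmap_eq0 {x : ℝ} (h0 : 0 ≤ β * x) (hlt : β * x < 1) : Tmap β x = β * x :=
  Int.fract_eq_self.mpr ⟨h0, hlt⟩

lemma Tmap_eq1 {x : ℝ} (h0 : 1 ≤ β * x) (hlt : β * x < 2) : Tmap β x = β * x - 1 := by
  have h : Int.fract (β * x - ((1:ℤ):ℝ)) = Int.fract (β * x) := Int.fract_sub_intCast _ _
  unfold Tmap
  rw [← h]
  push_cast
  exact Int.fract_eq_self.mpr ⟨by linarith, by linarith⟩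

include h1 h2 in
lemma Tmap_cases {x : ℝ} (hx : x ∈ Set.Ico (0:ℝ) 1) :
    Tmap β x = β * x ∨ Tmap β x = β * x - 1 := by
  rcases lt_or_ge (β * x) 1 with h | h
  · exact Or.inl (Tmap_eq0 (mul_nonneg (by linarith) hx.1) h)
  · refine Or.inr (Tmap_eq1 h ?_)
    have := hx.2
    nlinarith

include h1 h2 in
lemma Tmap_after1 {x : ℝ} (hx : x ∈ Set.Ico (0:ℝ) 1) (h : Tmap β x = β * x - 1) :
    Tmap β (Tmap β x) = β * Tmap β x := by
  have h0 : 0 ≤ Tmap β x := (Tmap_mem x).1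
  have hlt : Tmap β x < β - 1 := by rw [h]; nlinarith [hx.2]
  refine Tmap_eq0 (mul_nonneg (by linarith) h0) ?_
  nlinarith

end basic
def Wseq (β v : ℝ) : ℕ → ℝ := fun k => Nat.rec v (fun _ W => (W+1)/β^2) k

section alg
variable {β v : ℝ} {mm : ℕ} (h1 : 1 < β) (h2 : β^2 = β + 1)
  (hv : v * (β^(2*mm)*β^4 - β) = β^(2*mm)*β^2 - 1)

include h1 in
lemma hc_ge : 1 ≤ β^(2*mm) := one_le_pow₀ (le_of_lt h1)

include h1 h2 in
lemma hd_pos : 0 < β^(2*mm)*β^4 - β := by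
  have hc := hc_ge (mm := mm) h1
  have hb0 : (0:ℝ) < β := by linarith
  have h4 : β^4 = 3*β + 2 := by nlinarith
  nlinarith [mul_le_mul_of_nonneg_right hc (by positivity : (0:ℝ) ≤ β^4)]

include h1 h2 in
lemma hn_pos : 0 < β^(2*mm)*β^2 - 1 := by
  have hc := hc_ge (mm := mm) h1
  nlinarith [mul_le_mul_of_nonneg_right hc (by positivity : (0:ℝ) ≤ β^2)]

include h1 h2 hv in
lemma v_eq : v = (β^(2*mm)*β^2 - 1)/(β^(2*mm)*β^4 - β) := by
  rw [eq_div_iff (ne_of_gt (hd_pos h1 h2))]; exact hv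

include h1 h2 hv in
lemma v_pos : 0 < v := by
  rw [v_eq h1 h2 hv]; exact div_pos (hn_pos h1 h2) (hd_pos h1 h2)

include h1 h2 hv in
lemma v_lt : β^2 * v < 1 := by
  rw [v_eq h1 h2 hv, mul_div_assoc', div_lt_one (hd_pos h1 h2)]
  have hc := hc_ge (mm := mm) h1
  have hb0 : (0:ℝ) < β := by linarith
  nlinarith

include h1 h2 hv in
lemma v_gt : 1 < β^3 * v := by
  rw [v_eq h1 h2 hv, mul_div_assoc', lt_div_iff₀ (hd_pos h1 h2)]
  have hc := hc_ge (mm := mm) h1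
  have hb0 : (0:ℝ) < β := by linarith
  have h3 : β^3 = 2*β + 1 := by nlinarith
  have h5 : β^5 = 5*β + 3 := by nlinarith
  nlinarith [mul_le_mul_of_nonneg_right hc (by linarith : (0:ℝ) ≤ 2*β+1)]

lemma W0 : Wseq β v 0 = v := rfl
lemma Wrec (k : ℕ) : Wseq β v (k+1) = (Wseq β v k + 1)/β^2 := rfl

include h1 h2 hv in
lemma Wpos : ∀ k, 0 < Wseq β v k := by
  intro k
  have hb0 : (0:ℝ) < β := by linarith
  induction k with
  | zero => exact v_pos h1 h2 hv
  | succ k ih => rw [Wrec]; positivity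

include h1 h2 hv in
lemma Wub : ∀ k, β * Wseq β v k < 1 := by
  intro k
  have hb0 : (0:ℝ) < β := by linarith
  induction k with
  | zero =>
      have h := v_lt h1 h2 hv
      have h' := v_pos h1 h2 hv
      rw [W0]; nlinarith
  | succ k ih =>
      rw [Wrec, mul_div_assoc', div_lt_one (by positivity)]
      nlinarith

include h1 h2 hv in
lemma Wlb (k : ℕ) : 1 ≤ β^2 * Wseq β v (k+1) := by
  have hb0 : (0:ℝ) < β := by linarith
  have hW := Wpos h1 h2 hv k
  have e : β^2 * ((Wseq β v k + 1)/β^2) = Wseq β v k + 1 := by field_simp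
  rw [Wrec, e]; linarith

include h1 h2 hv in
lemma Wcf : ∀ k, β^(2*k) * (β * Wseq β v k) = β * v + β^(2*k) - 1 := by
  intro k
  have hb0 : (0:ℝ) < β := by linarith
  have hh : β^2 - β - 1 = 0 := by linear_combination h2
  induction k with
  | zero => simp [W0]
  | succ k ih =>
      rw [Wrec, show 2*(k+1) = 2*k+2 by ring, pow_add]
      field_simp
      linear_combination ih - β^(2*k) * hh

include h1 h2 hv in
lemma Wtop : Wseq β v mm = β^3 * v - 1 := by
  have hcf := Wcf h1 h2 hv mm
  have hb0 : (0:ℝ) < β := by linarith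
  have hh : β^2 - β - 1 = 0 := by linear_combination h2
  have hcb : (β^(2*mm) * β : ℝ) ≠ 0 := by positivity
  have key : β^(2*mm) * β * Wseq β v mm = β^(2*mm) * β * (β^3*v - 1) := by
    have : β^(2*mm) * β * (β^3*v - 1) = β * v + β^(2*mm) - 1 := by
      linear_combination hv + β^(2*mm)*hh
    rw [this]; linear_combination hcf
  exact mul_left_cancel₀ hcb key

include h1 h2 hv in
lemma Wgt (k : ℕ) : v < Wseq β v (k+1) := by
  have h1' := Wlb h1 h2 hv k
  have h' := v_lt h1 h2 hv
  have hb0 : (0:ℝ) < β := by linarith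
  nlinarith [Wpos h1 h2 hv (k+1)]

end alg

section orbit
variable {β v : ℝ} {mm : ℕ} (h1 : 1 < β) (h2 : β^2 = β + 1)
  (hv : v * (β^(2*mm)*β^4 - β) = β^(2*mm)*β^2 - 1)

include h1 h2 hv in
lemma chain1 : ∀ k ≤ mm, (Tmap β)^[3+2*k] v = Wseq β v (mm - k) := by
  have hb0 : (0:ℝ) < β := by linarith
  have hv0 := v_pos h1 h2 hv
  have hv2 := v_lt h1 h2 hv
  have hv3 := v_gt h1 h2 hv
  have hb2 := gr_lt2 h1 h2
  have base : (Tmap β)^[3] v = Wseq β v mm := by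
    have e1 : Tmap β v = β * v := Tmap_eq0 (by positivity) (by nlinarith)
    have e2 : Tmap β (β*v) = β^2 * v := by
      rw [Tmap_eq0 (by positivity) (by nlinarith)]; ring
    have e3 : Tmap β (β^2*v) = β^3 * v - 1 := by
      rw [Tmap_eq1 (by nlinarith) (by nlinarith)]; ring
    have : (3:ℕ) = 2+1 := rfl
    rw [Wtop h1 h2 hv]
    simp [Function.iterate_succ_apply', e1, e2, e3]
  intro k hk
  induction k with
  | zero => simpa using base
  | succ k ih =>
      have hk' : k ≤ mm := by omega
      have hkm : k < mm := by omega
      have ihh := ih hk'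
      have hj : mm - k = (mm - (k+1)) + 1 := by omega
      have hWp := Wpos h1 h2 hv (mm - k)
      have hWu := Wub h1 h2 hv (mm - k)
      have hWl : 1 ≤ β^2 * Wseq β v (mm - k) := by rw [hj]; exact Wlb h1 h2 hv _
      have e1 : Tmap β (Wseq β v (mm-k)) = β * Wseq β v (mm-k) :=
        Tmap_eq0 (by positivity) hWu
      have e2 : Tmap β (β * Wseq β v (mm-k)) = β^2 * Wseq β v (mm-k) - 1 := by
        rw [Tmap_eq1 (by nlinarith) (by nlinarith)]; ring
      have e3 : β^2 * Wseq β v (mm-k) - 1 = Wseq β v (mm - (k+1)) := by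
        rw [hj, Wrec]; field_simp; ring
      have hidx : 3+2*(k+1) = (3+2*k) + 1 + 1 := by omega
      rw [hidx, Function.iterate_succ_apply', Function.iterate_succ_apply', ihh,
        e1, e2, e3]

include h1 h2 hv in
lemma chain2 : ∀ k < mm, (Tmap β)^[4+2*k] v = β * Wseq β v (mm - k) := by
  intro k hk
  have hb0 : (0:ℝ) < β := by linarith
  have hWp := Wpos h1 h2 hv (mm - k)
  have hWu := Wub h1 h2 hv (mm - k)
  have hidx : 4+2*k = (3+2*k) + 1 := by omega
  rw [hidx, Function.iterate_succ_apply', chain1 h1 h2 hv k (by omega),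
    Tmap_eq0 (by positivity) hWu]

include h1 h2 hv in
lemma orbit_per : (Tmap β)^[2*mm+3] v = v := by
  have := chain1 h1 h2 hv mm le_rfl
  simpa [Nat.sub_self, W0, show 2*mm+3 = 3+2*mm by omega] using this

include h1 h2 hv in
lemma orbit_gt : ∀ n, 0 < n → n < 2*mm+3 → v < (Tmap β)^[n] v := by
  have hb0 : (0:ℝ) < β := by linarith
  have hv0 := v_pos h1 h2 hv
  intro n hn0 hnq
  match n, hn0 with
  | 1, _ =>
      have e1 : Tmap β v = β * v := Tmap_eq0 (by positivity) (by nlinarith [v_lt h1 h2 hv])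
      simp [e1]; nlinarith
  | 2, _ =>
      have e1 : Tmap β v = β * v := Tmap_eq0 (by positivity) (by nlinarith [v_lt h1 h2 hv])
      have e2 : Tmap β (β*v) = β^2 * v := by
        rw [Tmap_eq0 (by positivity) (by nlinarith [v_lt h1 h2 hv])]; ring
      simp [Function.iterate_succ_apply', e1, e2]
      nlinarith
  | (j+3), _ =>
      rcases Nat.even_or_odd j with ⟨k, hkj⟩ | ⟨k, hkj⟩
      · -- n = 3 + 2k, k < mm
        have hkm : k < mm := by omega
        have : (Tmap β)^[3+2*k] v = Wseq β v (mm - k) := chain1 h1 h2 hv k (by omega)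
        have hidx : j + 3 = 3 + 2*k := by omega
        rw [hidx, this]
        have : mm - k = (mm - k - 1) + 1 := by omega
        rw [this]
        exact Wgt h1 h2 hv _
      · -- n = 4 + 2k
        have hkm : k < mm := by omega
        have hc2 : (Tmap β)^[4+2*k] v = β * Wseq β v (mm - k) := chain2 h1 h2 hv k hkm
        have hidx : j + 3 = 4 + 2*k := by omega
        rw [hidx, hc2]
        have hW : v < Wseq β v (mm - k) := by
          have : mm - k = (mm - k - 1) + 1 := by omega
          rw [this]; exact Wgt h1 h2 hv _
        nlinarith [Wpos h1 h2 hv (mm - k)]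

include h1 h2 hv in
lemma orbit_ge : ∀ n : ℕ, v ≤ (Tmap β)^[n] v := by
  intro n
  have hpp : Function.IsPeriodicPt (Tmap β) (2*mm+3) v := orbit_per h1 h2 hv
  have : (Tmap β)^[n % (2*mm+3)] v = (Tmap β)^[n] v := hpp.iterate_mod_apply n
  rw [← this]
  rcases Nat.eq_zero_or_pos (n % (2*mm+3)) with h | h
  · simp [h]
  · exact le_of_lt (orbit_gt h1 h2 hv _ h (Nat.mod_lt _ (by omega)))

include h1 h2 hv in
lemma orbit_minper : Function.minimalPeriod (Tmap β) v = 2*mm+3 := by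
  have hpp : Function.IsPeriodicPt (Tmap β) (2*mm+3) v := orbit_per h1 h2 hv
  have hdvd := Function.IsPeriodicPt.minimalPeriod_dvd hpp
  have hpos : 0 < Function.minimalPeriod (Tmap β) v :=
    hpp.minimalPeriod_pos (by omega)
  rcases Nat.lt_or_ge (Function.minimalPeriod (Tmap β) v) (2*mm+3) with h | h
  · exfalso
    have hfix : (Tmap β)^[Function.minimalPeriod (Tmap β) v] v = v :=
      Function.isPeriodicPt_minimalPeriod (Tmap β) v
    have := orbit_gt h1 h2 hv _ hpos h
    rw [hfix] at this
    exact lt_irrefl _ this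
  · exact le_antisymm (Nat.le_of_dvd (by omega) hdvd) h

end orbit

section upper
variable {β : ℝ} (h1 : 1 < β)

include h1 in
lemma affine_per {c : ℝ} (z : ℕ → ℝ) (hz : ∀ k, z (k+1) = β^2 * z k - c)
    {q : ℕ} (hq : 0 < q) (hper : z q = z 0) : z 1 = z 0 := by
  have hb2 : (1:ℝ) < β^2 := by nlinarith
  rcases lt_trichotomy (z 1) (z 0) with h | h | h
  · exfalso
    have mono : ∀ k, z (k+1) < z k := by
      intro k
      induction k with
      | zero => exact h
      | succ k ih =>
          have := mul_lt_mul_of_pos_left ih (show (0:ℝ) < β^2 by nlinarith)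
          linarith [hz (k+1), hz k]
    have : StrictAnti z := strictAnti_nat_of_succ_lt mono
    exact absurd hper (ne_of_lt (this hq))
  · exact h
  · exfalso
    have mono : ∀ k, z k < z (k+1) := by
      intro k
      induction k with
      | zero => exact h
      | succ k ih =>
          have := mul_lt_mul_of_pos_left ih (show (0:ℝ) < β^2 by nlinarith)
          linarith [hz (k+1), hz k]
    have : StrictMono z := strictMono_nat_of_lt_succ mono
    exact absurd hper (ne_of_gt (this hq))

variable {v : ℝ} {mm : ℕ} (h2 : β^2 = β + 1)
  (hv : v * (β^(2*mm)*β^4 - β) = β^(2*mm)*β^2 - 1)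

include h1 h2 hv in
lemma upper_bound {x : ℝ} (hx : x ∈ Set.Ico (0:ℝ) 1)
    (hmp : Function.minimalPeriod (Tmap β) x = 2*mm+3) :
    ∃ n : ℕ, (Tmap β)^[n] x ≤ v := by
  have hb0 : (0:ℝ) < β := by linarith
  set q := 2*mm+3 with hqdef
  set y : ℕ → ℝ := fun n => (Tmap β)^[n] x with hydef
  have hy : ∀ n, y n ∈ Set.Ico (0:ℝ) 1 := by
    intro n
    cases n with
    | zero => exact hx
    | succ n => rw [hydef]; simp only [Function.iterate_succ_apply']; exact Tmap_mem _
  have hpp : Function.IsPeriodicPt (Tmap β) q x := by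
    rw [← hmp]; exact Function.isPeriodicPt_minimalPeriod (Tmap β) x
  have hperiod : ∀ n, y (n + q) = y n := by
    intro n
    show (Tmap β)^[n+q] x = (Tmap β)^[n] x
    rw [Function.iterate_add_apply, hpp]
  have hstep : ∀ n, y (n+1) = β * y n ∨ y (n+1) = β * y n - 1 := by
    intro n
    have : y (n+1) = Tmap β (y n) := by
      rw [hydef]; simp only [Function.iterate_succ_apply']
    rw [this]; exact Tmap_cases h1 h2 (hy n)
  have h11 : ∀ n, y (n+1) = β * y n - 1 → y (n+2) = β * y (n+1) := by
    intro n hn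
    have e1 : y (n+1) = Tmap β (y n) := by
      rw [hydef]; simp only [Function.iterate_succ_apply']
    have e2 : y (n+2) = Tmap β (y (n+1)) := by
      rw [hydef]; simp only [Function.iterate_succ_apply']
    rw [e2, e1]
    rw [e1] at hn
    exact Tmap_after1 h1 h2 (hy n) hn
  -- case: three consecutive zero digits
  by_cases HT : ∃ n, y (n+1) = β * y n ∧ y (n+2) = β * y (n+1) ∧ y (n+3) = β * y (n+2)
  · obtain ⟨n, e1, e2, e3⟩ := HT
    refine ⟨n, ?_⟩
    have hlt : β^3 * y n < 1 := by
      have := (hy (n+3)).2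
      rw [e3, e2, e1] at this
      nlinarith
    have hv3 := v_gt h1 h2 hv
    have hb3 : (0:ℝ) < β^3 := by positivity
    have hlt2 : β^3 * y n < β^3 * v := by linarith
    show y n ≤ v
    exact le_of_lt ((mul_lt_mul_iff_right₀ hb3).mp hlt2)
  · push_neg at HT
    by_cases H2 : ∃ n, y (n+1) = β * y n ∧ y (n+2) = β * y (n+1)
    · -- walk case
      obtain ⟨n, hP0, hP1⟩ := H2
      have hnP2 : y (n+3) = β * y (n+2) - 1 := by
        rcases hstep (n+2) with h | h
        · exact absurd h (HT n hP0 hP1)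
        · exact h
      -- claimC
      have claimC : ∀ i, (∀ k < i, ¬ (y (n+4+2*k+1) = β * y (n+4+2*k))) →
          y (n+3+2*i+1) = β * y (n+3+2*i) := by
        intro i
        induction i with
        | zero =>
            intro _
            have i1 : n+3+2*0+1 = n+2+2 := by omega
            have i2 : n+3+2*0 = n+2+1 := by omega
            rw [i1, i2]
            exact h11 (n+2) hnP2
        | succ i ih =>
            intro hno
            have hPi := ih (fun k hk => hno k (by omega))
            have hnPi : y (n+4+2*i+1) = β * y (n+4+2*i) - 1 := by
              rcases hstep (n+4+2*i) with h | h
              · exact absurd h (hno i (by omega))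
              · exact h
            have := h11 (n+4+2*i) hnPi
            have hidx : n+4+2*i+2 = n+3+2*(i+1)+1 := by omega
            have hidx2 : n+4+2*i+1 = n+3+2*(i+1) := by omega
            rw [hidx, hidx2] at this
            exact this
      have hEx : ∃ i, i ≤ mm ∧ y (n+4+2*i+1) = β * y (n+4+2*i) := by
        by_contra hno
        push_neg at hno
        have hnomm : ∀ k < mm, ¬ (y (n+4+2*k+1) = β * y (n+4+2*k)) := by
          intro k hk
          exact hno k (by omega)
        have : ¬ (y (n+4+2*mm+1) = β * y (n+4+2*mm)) := hno mm le_rfl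
        apply this
        have i1 : n+4+2*mm+1 = (n+2) + q := by omega
        have i2 : n+4+2*mm = (n+1) + q := by omega
        rw [i1, i2, hperiod, hperiod]
        exact hP1
      classical
      obtain ⟨j, ⟨hjmm, hPj1⟩, hjmin0⟩ :
          ∃ j, (j ≤ mm ∧ y (n+4+2*j+1) = β * y (n+4+2*j)) ∧
            ∀ k < j, ¬ (k ≤ mm ∧ y (n+4+2*k+1) = β * y (n+4+2*k)) :=
        ⟨Nat.find hEx, Nat.find_spec hEx, fun k hk => Nat.find_min hEx hk⟩
      have hjmin : ∀ k < j, ¬ (y (n+4+2*k+1) = β * y (n+4+2*k)) := by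
        intro k hk hcon
        exact hjmin0 k hk ⟨by omega, hcon⟩
      have hPj : y (n+3+2*j+1) = β * y (n+3+2*j) := claimC j hjmin
      set u : ℕ → ℝ := fun i => y (n+3+2*i) with hudef
      have hu0 : u 0 = β^3 * y n - 1 := by
        show y (n+3) = β^3 * y n - 1
        rw [hnP2, hP1, hP0]; ring
      have hui : ∀ i < j, u (i+1) = β^2 * u i - 1 := by
        intro i hij
        have hPi : y (n+3+2*i+1) = β * y (n+3+2*i) :=
          claimC i (fun k hk => hjmin k (by omega))
        have hnPi : y (n+4+2*i+1) = β * y (n+4+2*i) - 1 := by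
          rcases hstep (n+4+2*i) with h | h
          · exact absurd h (hjmin i hij)
          · exact h
        show y (n+3+2*(i+1)) = β^2 * y (n+3+2*i) - 1
        have hidx : n+3+2*(i+1) = n+4+2*i+1 := by omega
        have hidx2 : n+4+2*i = n+3+2*i+1 := by omega
        rw [hidx, hnPi, hidx2, hPi]; ring
      -- u j < 1/β²  i.e. β^2 * u j < 1
      have hujlt : β^2 * u j < 1 := by
        have e1 : y (n+4+2*j) = β * u j := by
          have hidx : n+4+2*j = n+3+2*j+1 := by omega
          rw [hidx, hPj]
        have e2 : y (n+4+2*j+1) = β * y (n+4+2*j) := hPj1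
        have := (hy (n+4+2*j+1)).2
        rw [e2, e1] at this
        nlinarith
      -- difference propagation
      have hWtop := Wtop h1 h2 hv
      have hdiff : ∀ i, i ≤ j → u i - Wseq β v (mm - i) = β^(2*i) * (β^3 * (y n - v)) := by
        intro i
        induction i with
        | zero =>
            intro _
            simp only [Nat.sub_zero, pow_zero, one_mul]
            rw [hu0, hWtop]; ring
        | succ i ih =>
            intro hij
            have hij' : i < j := by omega
            have hi : u (i+1) = β^2 * u i - 1 := hui i hij'
            have him : i < mm := by omega
            have hWr : Wseq β v (mm - (i+1)) = β^2 * Wseq β v (mm - i) - 1 := by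
              have hidx : mm - i = (mm - (i+1)) + 1 := by omega
              rw [hidx, Wrec]; field_simp; ring
            rw [hi, hWr, show 2*(i+1) = 2*i+2 by ring, pow_add]
            have := ih (by omega)
            linear_combination β^2 * this
      rcases Nat.lt_or_ge j mm with hjlt | hjge
      · -- j < mm : strict inequality
        refine ⟨n, ?_⟩
        have hd := hdiff j le_rfl
        have hWl : 1 ≤ β^2 * Wseq β v (mm - j) := by
          have hidx : mm - j = (mm - j - 1) + 1 := by omega
          rw [hidx]; exact Wlb h1 h2 hv _
        have hult : u j < Wseq β v (mm - j) := by nlinarith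
        have hppow : (0:ℝ) < β^(2*j) := by positivity
        show y n ≤ v
        by_contra hcon
        push_neg at hcon
        have hpos : 0 < β^(2*j) * (β^3 * (y n - v)) := by
          have hyv : 0 < y n - v := by linarith
          positivity
        linarith
      · -- j = mm : equality case
        have hjeq : j = mm := le_antisymm hjmm hjge
        refine ⟨n, ?_⟩
        have hd := hdiff j le_rfl
        rw [hjeq] at hd
        have humm : u mm = y n := by
          show y (n+3+2*mm) = y n
          have hidx : n+3+2*mm = n + q := by omega
          rw [hidx, hperiod]
        rw [humm, Nat.sub_self, W0] at hd
        have hpow : (1:ℝ) < β^(2*mm) * β^3 := by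
          have hc := hc_ge (mm := mm) h1
          have hb3 : (1:ℝ) < β^3 := by nlinarith
          calc (1:ℝ) < β^3 := hb3
            _ = 1 * β^3 := (one_mul _).symm
            _ ≤ β^(2*mm) * β^3 := mul_le_mul_of_nonneg_right hc (by positivity)
        show y n ≤ v
        rcases lt_trichotomy (y n) v with h | h | h
        · exact le_of_lt h
        · exact le_of_eq h
        · exfalso
          have h0 : 0 < y n - v := by linarith
          have hgt : y n - v < β^(2*mm) * (β^3 * (y n - v)) := by
            calc y n - v = 1 * (y n - v) := (one_mul _).symm
              _ < (β^(2*mm) * β^3) * (y n - v) := mul_lt_mul_of_pos_right hpow h0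
              _ = β^(2*mm) * (β^3 * (y n - v)) := by ring
          linarith [hd]
    · -- no two consecutive zero digits: parity contradiction
      exfalso
      push_neg at H2
      have key : y 2 = y 0 := by
        rcases hstep 0 with hP | hnP
        · -- digits 0101...
          have claim : ∀ k, y (2*k+1) = β * y (2*k) := by
            intro k
            induction k with
            | zero => exact hP
            | succ k ih =>
                have hd : y (2*k+2) = β * y (2*k+1) - 1 := by
                  rcases hstep (2*k+1) with h | h
                  · exact absurd h (H2 (2*k) ih)
                  · exact h
                have := h11 (2*k+1) hd
                have i1 : 2*(k+1)+1 = 2*k+3 := by omega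
                have i2 : 2*(k+1) = 2*k+2 := by omega
                rw [i1, i2]
                exact this
          have zrec : ∀ k, y (2*(k+1)) = β^2 * y (2*k) - 1 := by
            intro k
            have hd : y (2*k+2) = β * y (2*k+1) - 1 := by
              rcases hstep (2*k+1) with h | h
              · exact absurd h (H2 (2*k) (claim k))
              · exact h
            have i2 : 2*(k+1) = 2*k+2 := by omega
            rw [i2, hd, claim k]; ring
          have hzq : y (2*q) = y 0 := by
            have : 2*q = q + q := by omega
            rw [this, hperiod, ← Nat.zero_add q, hperiod]
          exact affine_per h1 (fun k => y (2*k)) zrec (by omega : 0 < q) hzq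
        · -- digits 1010...
          have claim : ∀ k, y (2*k+1) = β * y (2*k) - 1 ∧ y (2*k+2) = β * y (2*k+1) := by
            intro k
            induction k with
            | zero => exact ⟨hnP, h11 0 hnP⟩
            | succ k ih =>
                have hd : y (2*k+3) = β * y (2*k+2) - 1 := by
                  rcases hstep (2*k+2) with h | h
                  · exact absurd h (H2 (2*k+1) ih.2)
                  · exact h
                have h2' := h11 (2*k+2) hd
                have i1 : 2*(k+1)+1 = 2*k+3 := by omega
                have i2 : 2*(k+1) = 2*k+2 := by omega
                have i3 : 2*(k+1)+2 = 2*k+4 := by omega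
                constructor
                · rw [i1, i2]; exact hd
                · rw [i3, i1]; exact h2'
          have zrec : ∀ k, y (2*(k+1)) = β^2 * y (2*k) - β := by
            intro k
            have i2 : 2*(k+1) = 2*k+2 := by omega
            rw [i2, (claim k).2, (claim k).1]; ring
          have hzq : y (2*q) = y 0 := by
            have : 2*q = q + q := by omega
            rw [this, hperiod, ← Nat.zero_add q, hperiod]
          exact affine_per h1 (fun k => y (2*k)) zrec (by omega : 0 < q) hzq
      have hpp2 : Function.IsPeriodicPt (Tmap β) 2 x := by
        show (Tmap β)^[2] x = x
        exact key
      have hdvd := Function.IsPeriodicPt.minimalPeriod_dvd hpp2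
      rw [hmp] at hdvd
      have := Nat.le_of_dvd (by omega) hdvd
      omega

end upper


section valsec

lemma flat_len (m : ℕ) : ((List.replicate m ([0,1] : List ℕ)).flatten).length = 2*m := by
  induction m with
  | zero => simp
  | succ m ih => rw [List.replicate_succ, List.flatten_cons, List.length_append, ih]; simp; omega

lemma flat_get (m : ℕ) : ∀ k, k < 2*m →
    ((List.replicate m ([0,1] : List ℕ)).flatten).getD k 0 = k % 2 := by
  induction m with
  | zero => omega
  | succ m ih =>
      intro k hk
      rw [List.replicate_succ, List.flatten_cons]
      match k with
      | 0 => simp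
      | 1 => simp
      | (k+2) =>
          have e : ([0,1] : List ℕ) ++ (List.replicate m ([0,1] : List ℕ)).flatten
              = 0 :: 1 :: (List.replicate m ([0,1] : List ℕ)).flatten := by simp
          rw [e, List.getD_cons_succ, List.getD_cons_succ, ih k (by omega)]
          omega

lemma sum_digits {β : ℝ} (hb0 : 0 < β) (m : ℕ) :
    ∑ i ∈ Finset.range (2*m+1), (((if i = 0 then 0 else (i-1) % 2 : ℕ)) : ℝ)/β^(i+1)
      = ∑ k ∈ Finset.range m, (β^(2*k+3))⁻¹ := by
  induction m with
  | zero => simp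
  | succ mm ih =>
      rw [show 2*(mm+1)+1 = (2*mm+1)+1+1 by omega, Finset.sum_range_succ,
        Finset.sum_range_succ, ih, Finset.sum_range_succ]
      have e1 : (((if (2*mm+1) = 0 then 0 else ((2*mm+1)-1) % 2 : ℕ)) : ℝ) = 0 := by
        rw [if_neg (by omega), show (2*mm+1-1) % 2 = 0 by omega]
        norm_num
      have e2 : (((if (2*mm+1+1) = 0 then 0 else ((2*mm+1+1)-1) % 2 : ℕ)) : ℝ) = 1 := by
        rw [if_neg (by omega), show (2*mm+1+1-1) % 2 = 1 by omega]
        norm_num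
      rw [e1, e2, show 2*mm+1+1+1 = 2*mm+3 by omega, inv_eq_one_div]
      ring

variable {β v : ℝ} (h1 : 1 < β) (h2 : β^2 = β + 1)

include h1 h2 in
lemma val_formula (m : ℕ)
    (hveq : v * ((β^(2*m+1) - 1) * (1 - β^2)) = 1 - β^(2*m)) :
    val β (wordSeq (0 :: (List.replicate m ([0,1] : List ℕ)).flatten)) = v := by
  unfold val
  have hb0 : (0:ℝ) < β := by linarith
  set w : List ℕ := 0 :: (List.replicate m ([0,1] : List ℕ)).flatten with hw
  set q : ℕ := 2*m+1 with hq
  have hlen : w.length = q := by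
    rw [hw, List.length_cons, flat_len]
  have hdig : ∀ r, r < q → w.getD r 0 = if r = 0 then 0 else (r-1) % 2 := by
    intro r hr
    match r with
    | 0 => simp [hw]
    | (r+1) =>
        rw [hw, List.getD_cons_succ, flat_get m r (by omega)]
        simp
  have hdle : ∀ i, wordSeq w i ≤ 1 := by
    intro i
    unfold wordSeq
    rw [hlen]
    have := hdig (i % q) (Nat.mod_lt _ (by omega))
    rw [this]
    split <;> omega
  set a : ℕ → ℝ := fun i => ((wordSeq w i : ℝ) / β ^ (i+1)) with hadef
  have hnn : ∀ i, 0 ≤ a i := by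
    intro i; apply div_nonneg (by positivity) (by positivity)
  have hle : ∀ i, a i ≤ (β⁻¹)^(i+1) := by
    intro i
    rw [inv_pow, inv_eq_one_div]
    exact (div_le_div_iff_of_pos_right (by positivity)).mpr (by exact_mod_cast hdle i)
  have hgeo : Summable (fun i : ℕ => (β⁻¹)^(i+1)) := by
    have h0 : (0:ℝ) ≤ β⁻¹ := by positivity
    have hlt : β⁻¹ < 1 := inv_lt_one_of_one_lt₀ h1
    have := (summable_geometric_of_lt_one h0 hlt).mul_right β⁻¹
    apply this.congr
    intro i
    rw [pow_succ]
  have hsum : Summable a := Summable.of_nonneg_of_le hnn hle hgeo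
  have hshift : ∀ i, a (i+q) = (β^q)⁻¹ * a i := by
    intro i
    have hd : wordSeq w (i+q) = wordSeq w i := by
      unfold wordSeq
      rw [hlen, Nat.add_mod_right]
    rw [hadef]
    simp only [hd]
    rw [show i+q+1 = (i+1)+q by omega, pow_add]
    ring
  have hsplit := Summable.sum_add_tsum_nat_add (f := a) q hsum
  have htail : ∑' i, a (i+q) = (β^q)⁻¹ * ∑' i, a i := by
    rw [tsum_congr hshift, tsum_mul_left]
  rw [htail] at hsplit
  set T : ℝ := ∑' i, a i with hT
  set Sq : ℝ := ∑ i ∈ Finset.range q, a i with hSq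
  have hqpow : (1:ℝ) < β^q := one_lt_pow₀ h1 (by omega)
  have hmain : T * (β^q - 1) = Sq * β^q := by
    have e : (β^q)⁻¹ * β^q = 1 := inv_mul_cancel₀ (by positivity)
    linear_combination (-(β^q)) * hsplit + T * e
  -- compute Sq
  have hSqval : Sq = ∑ k ∈ Finset.range m, (β^(2*k+3))⁻¹ := by
    have hcong : Sq = ∑ i ∈ Finset.range q,
        (((if i = 0 then 0 else (i-1) % 2 : ℕ) : ℝ) / β^(i+1)) := by
      apply Finset.sum_congr rfl
      intro i hi
      have hiq : i < q := Finset.mem_range.mp hi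
      rw [hadef]
      simp only
      unfold wordSeq
      rw [hlen, Nat.mod_eq_of_lt hiq, hdig i hiq]
    rw [hcong, hq]
    exact sum_digits hb0 m
  have hSqq : Sq * β^q = ∑ i ∈ Finset.range m, (β^2)^i := by
    rw [hSqval, Finset.sum_mul]
    conv_rhs => rw [← Finset.sum_range_reflect]
    apply Finset.sum_congr rfl
    intro k hk
    have hkm : k < m := Finset.mem_range.mp hk
    rw [← pow_mul, inv_mul_eq_div, div_eq_iff (by positivity), ← pow_add]
    congr 1
    omega
  have hgeom : (∑ i ∈ Finset.range m, (β^2)^i) * (1 - β^2) = 1 - β^(2*m) := by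
    have := geom_sum_mul (β^2) m
    rw [← pow_mul] at this
    linear_combination -this
  have hne : (1:ℝ) - β^2 ≠ 0 := by nlinarith
  have hvG : v * (β^q - 1) = ∑ i ∈ Finset.range m, (β^2)^i := by
    apply mul_right_cancel₀ hne
    rw [hgeom]
    calc v * (β^q - 1) * (1 - β^2) = v * ((β^(2*m+1) - 1) * (1 - β^2)) := by rw [hq]; ring
      _ = 1 - β^(2*m) := hveq
  have hTv : T * (β^q - 1) = v * (β^q - 1) := by
    rw [hmain, hSqq, hvG]
  exact mul_right_cancel₀ (by nlinarith) hTv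

end valsec

theorem stmt6 (β : ℝ) (hβ : β = (1 + Real.sqrt 5) / 2) (m : ℕ) :
    S β (2 * m + 1) = val β (wordSeq (0 :: (List.replicate m ([0,1] : List ℕ)).flatten)) ∧
    S β (2 * m + 1) = (1 - β ^ (2 * m)) / ((β ^ (2 * m + 1) - 1) * (1 - β ^ 2)) := by
  have hs : Real.sqrt 5 ^ 2 = 5 := Real.sq_sqrt (by norm_num)
  have hs2 : (2:ℝ) < Real.sqrt 5 := by
    have := Real.lt_sqrt (x := 2) (y := 5) (by norm_num)
    exact this.mpr (by norm_num)
  have h1 : 1 < β := by rw [hβ]; linarith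
  have h2 : β^2 = β + 1 := by rw [hβ]; field_simp; nlinarith [hs]
  have hb0 : (0:ℝ) < β := by linarith
  have hh : β^2 - β - 1 = 0 := by linear_combination h2
  set V : ℝ := (1 - β ^ (2 * m)) / ((β ^ (2 * m + 1) - 1) * (1 - β ^ 2)) with hVdef
  have hqpow : (1:ℝ) < β^(2*m+1) := one_lt_pow₀ h1 (by omega)
  have hden : (β ^ (2 * m + 1) - 1) * (1 - β ^ 2) ≠ 0 := by
    have : (1:ℝ) - β^2 ≠ 0 := by nlinarith
    exact mul_ne_zero (by nlinarith) this
  have hveq : V * ((β^(2*m+1) - 1) * (1 - β^2)) = 1 - β^(2*m) := by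
    rw [hVdef]; exact div_mul_cancel₀ _ hden
  have hval : val β (wordSeq (0 :: (List.replicate m ([0,1] : List ℕ)).flatten)) = V :=
    val_formula h1 h2 m hveq
  -- the survivor-set characterization
  set Q : Set ℝ := {t | t ∈ Set.Ico (0:ℝ) 1 ∧
      ∃ x ∈ K β t, Function.minimalPeriod (Tmap β) x = 2*m+1} with hQdef
  have hS : S β (2*m+1) = sSup Q := rfl
  suffices hmain : sSup Q = V by
    constructor
    · rw [hS, hmain, hval]
    · rw [hS, hmain]
  rcases Nat.eq_zero_or_pos m with hm0 | hmpos
  · -- m = 0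
    subst hm0
    have hV0 : V = 0 := by
      rw [hVdef]
      norm_num
    have h0Q : (0:ℝ) ∈ Q := by
      refine ⟨⟨le_refl _, one_pos⟩, 0, ⟨⟨⟨le_refl _, one_pos⟩, ?_⟩, ?_⟩⟩
      · intro n
        cases n with
        | zero => simp
        | succ n =>
            rw [Function.iterate_succ_apply']
            exact (Tmap_mem _).1
      · apply Function.minimalPeriod_eq_one_iff_isFixedPt.mpr
        show Tmap β 0 = 0
        simp [Tmap]
    have hub : ∀ t ∈ Q, t ≤ 0 := by
      rintro t ⟨htI, x, ⟨⟨hxI, hxge⟩, hxmp⟩⟩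
      have hfix : Tmap β x = x := by
        have := Function.isPeriodicPt_minimalPeriod (Tmap β) x
        rw [hxmp] at this
        exact this
      have hx0 : x = 0 := by
        rcases Tmap_cases h1 h2 hxI with h | h
        · rw [hfix] at h
          nlinarith
        · rw [hfix] at h
          nlinarith [hxI.2, hxI.1]
      have := hxge 0
      simp at this
      rw [hx0] at this
      exact this
    rw [hV0]
    exact le_antisymm (csSup_le ⟨0, h0Q⟩ hub) (le_csSup ⟨0, hub⟩ h0Q)
  · -- m ≥ 1
    obtain ⟨mm, rfl⟩ : ∃ mm, m = mm + 1 := ⟨m - 1, by omega⟩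
    have hc3 : β^(2*(mm+1)+1) = β^(2*mm)*β^3 := by
      rw [show 2*(mm+1)+1 = 2*mm+3 by omega, pow_add]
    have hc2 : β^(2*(mm+1)) = β^(2*mm)*β^2 := by
      rw [show 2*(mm+1) = 2*mm+2 by omega, pow_add]
    rw [hc3, hc2] at hveq
    have hv : V * (β^(2*mm)*β^4 - β) = β^(2*mm)*β^2 - 1 := by
      linear_combination -hveq + V*(1 - β^(2*mm)*β^3)*hh
    have hVI : V ∈ Set.Ico (0:ℝ) 1 := by
      refine ⟨le_of_lt (v_pos h1 h2 hv), ?_⟩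
      have := v_lt h1 h2 hv
      nlinarith
    have hVQ : V ∈ Q := by
      refine ⟨hVI, V, ⟨⟨hVI, orbit_ge h1 h2 hv⟩, ?_⟩⟩
      rw [show 2*(mm+1)+1 = 2*mm+3 by omega]
      exact orbit_minper h1 h2 hv
    have hub : ∀ t ∈ Q, t ≤ V := by
      rintro t ⟨htI, x, ⟨⟨hxI, hxge⟩, hxmp⟩⟩
      rw [show 2*(mm+1)+1 = 2*mm+3 by omega] at hxmp
      obtain ⟨n, hn⟩ := upper_bound h1 h2 hv hxI hxmp
      exact le_trans (hxge n) hn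
    exact le_antisymm (csSup_le ⟨V, hVQ⟩ hub) (le_csSup ⟨V, hub⟩ hVQ)
end
end

section
/- For β = (1+√5)/2, S_β(4) = 1/(β^4 − 1); equivalently, no periodic binary sequence of smallest period 4 satisfies (0001)^∞ ≺ σ^n(x) ≺ (10)^∞ for all n ≥ 0, while (0001)^∞ itself satisfies (0001)^∞ ⪯ σ^n((0001)^∞) ≺ (10)^∞ for all n. -/
open Function Filter

noncomputable section

lemma shift_iter (x : ℕ → ℕ) (n i : ℕ) : (shift^[n] x) i = x (i + n) := by
  induction n generalizing x i with
  | zero => rfl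
  | succ n ih => rw [Function.iterate_succ_apply, ih]; rfl

lemma mod4 (i : ℕ) : i % 4 = 0 ∨ i % 4 = 1 ∨ i % 4 = 2 ∨ i % 4 = 3 := by omega

lemma aval (j : ℕ) : wordSeq [0,0,0,1] j = if j % 4 = 3 then 1 else 0 := by
  rcases mod4 j with h|h|h|h <;> simp [wordSeq, h]

lemma bval (j : ℕ) : wordSeq [1,0] j = if j % 2 = 0 then 1 else 0 := by
  have : j % 2 = 0 ∨ j % 2 = 1 := by omega
  rcases this with h|h <;> simp [wordSeq, h]

lemma not_seqLt_self (x : ℕ → ℕ) : ¬ seqLt x x := by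
  rintro ⟨n, -, h⟩; exact lt_irrefl _ h

lemma not_seqLt_of_11 (y : ℕ → ℕ) (h0 : y 0 = 1) (h1 : y 1 = 1) :
    ¬ seqLt y (wordSeq [1,0]) := by
  rintro ⟨k, hpre, hlt⟩
  match k with
  | 0 => rw [h0, bval] at hlt; simp at hlt
  | 1 => rw [h1, bval] at hlt; simp at hlt
  | (k+2) =>
    have := hpre 1 (by omega)
    rw [h1, bval] at this; simp at this

set_option maxHeartbeats 2000000 in
theorem stmt9 (β : ℝ) (hβ : β = (1 + Real.sqrt 5) / 2) :
    S β 4 = 1 / (β ^ 4 - 1) ∧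
    (∀ x : ℕ → ℕ, (∀ i, x i ≤ 1) → Function.minimalPeriod shift x = 4 →
      ¬ (∀ n : ℕ, seqLt (wordSeq [0,0,0,1]) (shift^[n] x) ∧ seqLt (shift^[n] x) (wordSeq [1,0]))) ∧
    (∀ n : ℕ, seqLe (wordSeq [0,0,0,1]) (shift^[n] (wordSeq [0,0,0,1])) ∧
      seqLt (shift^[n] (wordSeq [0,0,0,1])) (wordSeq [1,0])) := by
  refine ⟨?_, ?_, ?_⟩
  ·
    have h5 : Real.sqrt 5 ^ 2 = 5 := Real.sq_sqrt (by norm_num)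
    have hsnn : (0:ℝ) ≤ Real.sqrt 5 := Real.sqrt_nonneg 5
    have hβ1 : 1 < β := by rw [hβ]; nlinarith
    have hβ2 : β < 2 := by rw [hβ]; nlinarith
    have hsq : β ^ 2 = β + 1 := by rw [hβ]; linear_combination h5 / 4
    have h4 : β ^ 4 = 3 * β + 2 := by nlinarith [hsq]
    have hden : (0:ℝ) < β ^ 4 - 1 := by nlinarith
    set c : ℝ := 1 / (β ^ 4 - 1) with hc
    have hcpos : 0 < c := by positivity
    have hclt : c < 1 := by rw [hc, div_lt_one hden]; nlinarith
    -- orbit of c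
    have hfr : ∀ y : ℝ, 0 ≤ y → y < 1 → Int.fract y = y := fun y h1 h2 => Int.fract_eq_self.mpr ⟨h1, h2⟩
    have hcval : c * (β ^ 4 - 1) = 1 := by rw [hc, one_div, inv_mul_cancel₀ (ne_of_gt hden)]
    have e0 : Tmap β c = β * c := by
      show Int.fract (β * c) = β * c
      exact hfr _ (by positivity) (by rw [hc, h4]; rw [mul_one_div, div_lt_one (by nlinarith)]; nlinarith)
    have e1 : Tmap β (β * c) = β ^ 2 * c := by
      show Int.fract (β * (β * c)) = β ^ 2 * c
      rw [show β * (β * c) = β ^ 2 * c by ring]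
      exact hfr _ (by positivity) (by rw [hc, h4, hsq, mul_one_div, div_lt_one (by nlinarith)]; nlinarith)
    have e2 : Tmap β (β ^ 2 * c) = β ^ 3 * c := by
      show Int.fract (β * (β ^ 2 * c)) = β ^ 3 * c
      rw [show β * (β ^ 2 * c) = β ^ 3 * c by ring]
      have h3 : β ^ 3 = 2 * β + 1 := by nlinarith [hsq]
      exact hfr _ (by positivity) (by rw [hc, h4, h3, mul_one_div, div_lt_one (by nlinarith)]; nlinarith)
    have e3 : Tmap β (β ^ 3 * c) = c := by
      show Int.fract (β * (β ^ 3 * c)) = c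
      have : β * (β ^ 3 * c) = c + 1 := by
        rw [hc]; field_simp; nlinarith [hcval]
      rw [this]
      rw [show c + 1 = c + (1:ℤ) by norm_num, Int.fract_add_intCast]
      exact hfr _ (le_of_lt hcpos) hclt
    have i4 : (Tmap β)^[4] c = c := by
      rw [show (4:ℕ) = 3+1 from rfl, Function.iterate_succ_apply, e0,
          Function.iterate_succ_apply, e1, Function.iterate_succ_apply, e2,
          Function.iterate_one, e3]
    have iper : ∀ q r : ℕ, (Tmap β)^[4*q + r] c = (Tmap β)^[r] c := by
      intro q
      induction q with
      | zero => intro r; norm_num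
      | succ q ih =>
        intro r
        rw [show 4*(q+1) + r = (4*q + r) + 4 by ring, Function.iterate_add_apply, i4, ih]
    have iorb : ∀ n : ℕ, (Tmap β)^[n] c = β ^ (n % 4) * c := by
      intro n
      conv_lhs => rw [show n = 4*(n/4) + n % 4 by omega]
      rw [iper]
      rcases (by omega : n % 4 = 0 ∨ n % 4 = 1 ∨ n % 4 = 2 ∨ n % 4 = 3) with h|h|h|h <;> rw [h]
      · simp
      · simpa using e0
      · rw [show (2:ℕ) = 1+1 from rfl, Function.iterate_succ_apply, e0, Function.iterate_one, e1]
      · rw [show (3:ℕ) = 2+1 from rfl, Function.iterate_succ_apply, e0,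
            Function.iterate_succ_apply, e1, Function.iterate_one, e2]
    -- c is in the set
    have hmem : c ∈ {t | t ∈ Set.Ico (0:ℝ) 1 ∧ ∃ x ∈ K β t, Function.minimalPeriod (Tmap β) x = 4} := by
      refine ⟨⟨le_of_lt hcpos, hclt⟩, c, ⟨⟨le_of_lt hcpos, hclt⟩, ?_⟩, ?_⟩
      · intro n
        rw [iorb]
        have h1 : (1:ℝ) ≤ β ^ (n % 4) := one_le_pow₀ (le_of_lt hβ1)
        nlinarith
      · have hp : Function.IsPeriodicPt (Tmap β) 4 c := i4
        have hdvd : Function.minimalPeriod (Tmap β) c ∣ 4 := hp.minimalPeriod_dvd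
        have hpos : 0 < Function.minimalPeriod (Tmap β) c := hp.minimalPeriod_pos (by norm_num)
        have hle : Function.minimalPeriod (Tmap β) c ≤ 4 := Nat.le_of_dvd (by norm_num) hdvd
        have hit : (Tmap β)^[Function.minimalPeriod (Tmap β) c] c = c :=
          Function.iterate_minimalPeriod
        have h124 : Function.minimalPeriod (Tmap β) c = 1 ∨
            Function.minimalPeriod (Tmap β) c = 2 ∨ Function.minimalPeriod (Tmap β) c = 4 := by
          rcases (by omega : Function.minimalPeriod (Tmap β) c = 1 ∨
              Function.minimalPeriod (Tmap β) c = 2 ∨ Function.minimalPeriod (Tmap β) c = 3 ∨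
              Function.minimalPeriod (Tmap β) c = 4) with h|h|h|h
          · tauto
          · tauto
          · rw [h] at hdvd; norm_num at hdvd
          · tauto
        rcases h124 with h|h|h
        · exfalso
          rw [h, Function.iterate_one, e0] at hit
          nlinarith [mul_pos (sub_pos.mpr hβ1) hcpos]
        · exfalso
          rw [h, show (2:ℕ) = 1+1 from rfl, Function.iterate_succ_apply, e0,
              Function.iterate_one, e1] at hit
          nlinarith [mul_pos (show (0:ℝ) < β^2 - 1 by nlinarith) hcpos]
        · exact h
    -- upper bound
    have hub : ∀ t ∈ {t | t ∈ Set.Ico (0:ℝ) 1 ∧ ∃ x ∈ K β t, Function.minimalPeriod (Tmap β) x = 4},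
        t ≤ c := by
      rintro t ⟨⟨ht0, ht1⟩, x, ⟨⟨hx0, hx1⟩, hK⟩, hmin⟩
      obtain ⟨y, hy⟩ : ∃ y : ℕ → ℝ, y = fun i => (Tmap β)^[i] x := ⟨_, rfl⟩
      have hKy : ∀ i, t ≤ y i := by intro i; rw [hy]; exact hK i
      have hrec : ∀ i, y (i+1) = Int.fract (β * y i) := by
        intro n
        rw [hy]
        show (Tmap β)^[n+1] x = _
        rw [Function.iterate_succ_apply']
        rfl
      have hyI : ∀ i, 0 ≤ y i ∧ y i < 1 := by
        intro i
        cases i with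
        | zero => rw [hy]; exact ⟨hx0, hx1⟩
        | succ n =>
          rw [hrec]
          exact ⟨Int.fract_nonneg _, Int.fract_lt_one _⟩
      have hstep : ∀ i, ∃ d : ℝ, (d = 0 ∨ d = 1) ∧ y (i+1) = β * y i - d := by
        intro i
        refine ⟨((⌊β * y i⌋ : ℤ) : ℝ), ?_, ?_⟩
        · have hnn : (0:ℤ) ≤ ⌊β * y i⌋ := Int.floor_nonneg.mpr (mul_nonneg (by linarith) (hyI i).1)
          have hlt2 : ⌊β * y i⌋ < 2 := by
            have h2 : β * y i < ((2:ℤ):ℝ) := by push_cast; nlinarith [(hyI i).1, (hyI i).2]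
            exact Int.floor_lt.mpr h2
          have : ⌊β * y i⌋ = 0 ∨ ⌊β * y i⌋ = 1 := by omega
          rcases this with h|h <;> rw [h] <;> norm_num
        · rw [hrec, Int.fract]
      obtain ⟨d0, hd0, e0'⟩ := hstep 0
      obtain ⟨d1, hd1, e1'⟩ := hstep 1
      obtain ⟨d2, hd2, e2'⟩ := hstep 2
      obtain ⟨d3, hd3, e3'⟩ := hstep 3
      have e4' : y 4 = y 0 := by
        rw [hy]
        show (Tmap β)^[4] x = x
        have := Function.iterate_minimalPeriod (f := Tmap β) (x := x)
        rwa [hmin] at this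
      have b0 := hyI 0
      have b1 := hyI 1
      have b2 := hyI 2
      have b3 := hyI 3
      have hy40 : (0:ℝ) ≤ y 4 := e4' ▸ b0.1
      -- helper: two consecutive digits 1 is impossible
      have h11 : ∀ u v w : ℝ, v = β * u - 1 → w = β * v - 1 → 0 ≤ w → u < 1 → t ≤ c := by
        intro u v w h1 h2 h3 h4
        exfalso
        have hw : w = β^2 * u - β - 1 := by rw [h2, h1]; ring
        have hlt := mul_lt_mul_of_pos_left h4 (show (0:ℝ) < β^2 by positivity)
        rw [mul_one] at hlt
        linarith [hsq ▸ hlt]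
      -- helper: period two is impossible
      have hper2 : y 2 = y 0 → t ≤ c := by
        intro h02
        exfalso
        rw [hy] at h02
        have hp : Function.IsPeriodicPt (Tmap β) 2 x := h02
        have hdd := hp.minimalPeriod_dvd
        rw [hmin] at hdd
        omega
      have hgood : ∀ k : ℕ, (β^4 - 1) * y k = 1 → t ≤ c := by
        intro k hk
        have : y k = c := by
          rw [hc, eq_div_iff (ne_of_gt hden)]
          linear_combination hk
        exact this ▸ hKy k
      rcases hd0 with rfl|rfl <;> rcases hd1 with rfl|rfl <;>
        rcases hd2 with rfl|rfl <;> rcases hd3 with rfl|rfl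
      · -- 0000
        apply hper2
        have hz : (1 + β^2) * (y 2 - y 0) = 0 := by
          linear_combination β*e0' + e1' - β*e2' - e3' + e4'
        rcases mul_eq_zero.mp hz with h|h
        · nlinarith
        · linarith
      · -- 0001
        exact hgood 0 (by linear_combination (-β^3)*e0' + (-β^2)*e1' + (-β)*e2' + (-1)*e3' + e4')
      · -- 0010
        exact hgood 3 (by linear_combination (-β^3)*e3' + β^3*e4' + (-β^2)*e0' + (-β)*e1' - e2')
      · -- 0011
        exact h11 (y 2) (y 3) (y 4) e2' e3' hy40 b2.2
      · -- 0100
        exact hgood 2 (by linear_combination (-β^3)*e2' + (-β^2)*e3' + β^2*e4' + (-β)*e0' - e1')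
      · -- 0101
        apply hper2
        have hz : (1 + β^2) * (y 2 - y 0) = 0 := by
          linear_combination β*e0' + e1' - β*e2' - e3' + e4'
        rcases mul_eq_zero.mp hz with h|h
        · nlinarith
        · linarith
      · -- 0110
        exact h11 (y 1) (y 2) (y 3) e1' e2' b3.1 b1.2
      · -- 0111
        exact h11 (y 1) (y 2) (y 3) e1' e2' b3.1 b1.2
      · -- 1000
        exact hgood 1 (by linear_combination (-β^3)*e1' + (-β^2)*e2' + (-β)*e3' + β*e4' - e0')
      · -- 1001
        exact h11 (y 3) (y 0) (y 1) (by rw [← e4']; exact e3') e0' b1.1 b3.2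
      · -- 1010
        apply hper2
        have hz : (1 + β^2) * (y 2 - y 0) = 0 := by
          linear_combination β*e0' + e1' - β*e2' - e3' + e4'
        rcases mul_eq_zero.mp hz with h|h
        · nlinarith
        · linarith
      · -- 1011
        exact h11 (y 2) (y 3) (y 4) e2' e3' hy40 b2.2
      · -- 1100
        exact h11 (y 0) (y 1) (y 2) e0' e1' b2.1 b0.2
      · -- 1101
        exact h11 (y 0) (y 1) (y 2) e0' e1' b2.1 b0.2
      · -- 1110
        exact h11 (y 0) (y 1) (y 2) e0' e1' b2.1 b0.2
      · -- 1111
        exact h11 (y 0) (y 1) (y 2) e0' e1' b2.1 b0.2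
    have : S β 4 = c :=
      le_antisymm (csSup_le ⟨c, hmem⟩ hub) (le_csSup ⟨c, fun t ht => hub t ht⟩ hmem)
    rw [this, hc]
  ·
    intro x hx hmin h
    have hper4 : shift^[4] x = x := by
      have := Function.iterate_minimalPeriod (f := shift) (x := x)
      rwa [hmin] at this
    have hper : ∀ i, x (i + 4) = x i := by
      intro i
      conv_rhs => rw [← hper4]
      rw [shift_iter]
    have hq : ∀ q m, x (m + 4 * q) = x m := by
      intro q
      induction q with
      | zero => intro m; rfl
      | succ q ih =>
        intro m
        have : m + 4 * (q + 1) = (m + 4 * q) + 4 := by ring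
        rw [this, hper, ih]
    have hmod : ∀ i, x i = x (i % 4) := by
      intro i
      conv_lhs => rw [show i = i % 4 + 4 * (i / 4) by omega]
      rw [hq]
    have h0 : x 0 = 0 ∨ x 0 = 1 := by have := hx 0; omega
    have h1 : x 1 = 0 ∨ x 1 = 1 := by have := hx 1; omega
    have h2 : x 2 = 0 ∨ x 2 = 1 := by have := hx 2; omega
    have h3 : x 3 = 0 ∨ x 3 = 1 := by have := hx 3; omega
    -- helper to refute via 11 at position i (x i = 1, x (i+1) = 1)
    have h11 : ∀ i, x i = 1 → x (i+1) = 1 → False := by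
      intro i e0 e1
      exact not_seqLt_of_11 (shift^[i] x)
        (by rw [shift_iter]; simpa using e0)
        (by rw [shift_iter]; simpa [Nat.add_comm] using e1) (h i).2
    -- helper to refute when shift^[n] x = wordSeq [0,0,0,1]
    have hrot : ∀ n, (∀ i, x ((i + n) % 4) = wordSeq [0,0,0,1] i) → False := by
      intro n he
      apply not_seqLt_self (wordSeq [0,0,0,1])
      have : shift^[n] x = wordSeq [0,0,0,1] := by
        funext i
        rw [shift_iter, hmod, he]
      have h' := (h n).1
      rwa [this] at h'
    rcases h0 with h0|h0 <;> rcases h1 with h1|h1 <;> rcases h2 with h2|h2 <;> rcases h3 with h3|h3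
    -- 0000
    · obtain ⟨k, -, hlt⟩ := (h 0).1
      rw [Function.iterate_zero_apply] at hlt
      have : x k = 0 := by rcases mod4 k with hk|hk|hk|hk <;> rw [hmod, hk] <;> assumption
      omega
    -- 0001 : n = 0
    · exact hrot 0 (fun i => by
        rw [aval]
        rcases mod4 i with hi|hi|hi|hi <;> rw [show (i+0) % 4 = i % 4 by omega, hi] <;>
          simp [hi, h0, h1, h2, h3])
    -- 0010 : n = 3
    · exact hrot 3 (fun i => by
        rw [aval]
        rcases mod4 i with hi|hi|hi|hi <;>
          [rw [show (i+3) % 4 = 3 by omega]; rw [show (i+3) % 4 = 0 by omega];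
           rw [show (i+3) % 4 = 1 by omega]; rw [show (i+3) % 4 = 2 by omega]] <;>
          simp [hi, h0, h1, h2, h3])
    -- 0011
    · exact h11 2 h2 h3
    -- 0100 : n = 2
    · exact hrot 2 (fun i => by
        rw [aval]
        rcases mod4 i with hi|hi|hi|hi <;>
          [rw [show (i+2) % 4 = 2 by omega]; rw [show (i+2) % 4 = 3 by omega];
           rw [show (i+2) % 4 = 0 by omega]; rw [show (i+2) % 4 = 1 by omega]] <;>
          simp [hi, h0, h1, h2, h3])
    -- 0101 : shift x = wordSeq [1,0]
    · apply not_seqLt_self (wordSeq [1,0])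
      have : shift^[1] x = wordSeq [1,0] := by
        funext i
        rw [shift_iter, hmod, bval]
        rcases mod4 i with hi|hi|hi|hi <;>
          [rw [show (i+1) % 4 = 1 by omega]; rw [show (i+1) % 4 = 2 by omega];
           rw [show (i+1) % 4 = 3 by omega]; rw [show (i+1) % 4 = 0 by omega]] <;>
          first
          | (rw [if_pos (by omega)]; assumption)
          | (rw [if_neg (by omega)]; assumption)
      have h' := (h 1).2
      rwa [this] at h'
    -- 0110
    · exact h11 1 h1 h2
    -- 0111
    · exact h11 1 h1 h2
    -- 1000 : n = 1
    · exact hrot 1 (fun i => by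
        rw [aval]
        rcases mod4 i with hi|hi|hi|hi <;>
          [rw [show (i+1) % 4 = 1 by omega]; rw [show (i+1) % 4 = 2 by omega];
           rw [show (i+1) % 4 = 3 by omega]; rw [show (i+1) % 4 = 0 by omega]] <;>
          simp [hi, h0, h1, h2, h3])
    -- 1001
    · exact h11 3 h3 (by rw [show (3:ℕ)+1 = 0+4 from rfl, hper]; exact h0)
    -- 1010 : x = wordSeq [1,0]
    · apply not_seqLt_self (wordSeq [1,0])
      have : shift^[0] x = wordSeq [1,0] := by
        funext i
        rw [shift_iter, hmod, bval]
        rcases mod4 i with hi|hi|hi|hi <;> rw [show (i+0) % 4 = i % 4 by omega, hi] <;>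
          first
          | (rw [if_pos (by omega)]; assumption)
          | (rw [if_neg (by omega)]; assumption)
      have h' := (h 0).2
      rwa [this] at h'
    -- 1011
    · exact h11 2 h2 h3
    -- 1100
    · exact h11 0 h0 h1
    -- 1101
    · exact h11 0 h0 h1
    -- 1110
    · exact h11 0 h0 h1
    -- 1111
    · exact h11 0 h0 h1
  ·
    intro n
    constructor
    · rcases mod4 n with hn|hn|hn|hn
      · right
        funext i
        rw [shift_iter, aval, aval, show (i+n) % 4 = i % 4 by omega]
      · left
        refine ⟨2, fun i hi => ?_, ?_⟩
        · rw [shift_iter, aval, aval, if_neg (by omega), if_neg (by omega)]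
        · rw [shift_iter, aval, aval, if_neg (by omega), if_pos (by omega)]; norm_num
      · left
        refine ⟨1, fun i hi => ?_, ?_⟩
        · rw [shift_iter, aval, aval, if_neg (by omega), if_neg (by omega)]
        · rw [shift_iter, aval, aval, if_neg (by omega), if_pos (by omega)]; norm_num
      · left
        refine ⟨0, fun i hi => by omega, ?_⟩
        rw [shift_iter, aval, aval, if_neg (by omega), if_pos (by omega)]; norm_num
    · rcases mod4 n with hn|hn|hn|hn
      · exact ⟨0, fun i hi => by omega, by
          rw [shift_iter, aval, bval, if_neg (by omega), if_pos (by omega)]; norm_num⟩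
      · exact ⟨0, fun i hi => by omega, by
          rw [shift_iter, aval, bval, if_neg (by omega), if_pos (by omega)]; norm_num⟩
      · exact ⟨0, fun i hi => by omega, by
          rw [shift_iter, aval, bval, if_neg (by omega), if_pos (by omega)]; norm_num⟩
      · refine ⟨2, fun i hi => ?_, ?_⟩
        · interval_cases i
          · rw [shift_iter, aval, bval, if_pos (by omega), if_pos (by omega)]
          · rw [shift_iter, aval, bval, if_neg (by omega), if_neg (by omega)]
        · rw [shift_iter, aval, bval, if_neg (by omega), if_pos (by omega)]; norm_num
end
end
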